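/- Let τ, λ > 0 and suppose y ∈ Prox_{τλ‖(·)₊‖₀}(y + τz) for y, z ∈ ℝ^m. Define S = {i : |y_i + τz_i − √(τλ/2)| < √(τλ/2)}. Then y_i = 0 for every i ∈ S. -/

import Mathlib

/-!
Work coordinatewise with `w = y + τz`. The hypothesis `|w - √(τλ/2)| < √(τλ/2)` says
`0 < w` and `w² < 2τλ`. A minimizer `y` of `(t - w)²/(2τ) + λ ℓ(t)` cannot be negative,
since `t = 0` is then strictly better. If it were positive, comparing with `t = w`, where
the loss is already paid, forces `y = w`; but then `t = 0` saves `λ` at a quadratic cost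
of only `w²/(2τ) < λ`.
-/

/-- Heaviside / 0-1 loss: 1 for positive arguments, 0 otherwise. -/
noncomputable def heaviside (t : ℝ) : ℝ := if 0 < t then 1 else 0

/-- Its minimizers are the coordinates of `Prox_{τλ‖(·)₊‖₀}(w)`. -/
noncomputable def proxObjective (τ lam w t : ℝ) : ℝ :=
  (1 / (2 * τ)) * (t - w) ^ 2 + lam * heaviside t

lemma heaviside_of_pos {t : ℝ} (ht : 0 < t) : heaviside t = 1 := if_pos ht

lemma heaviside_of_nonpos {t : ℝ} (ht : t ≤ 0) : heaviside t = 0 := if_neg ht.not_gt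

section Minimizer

variable {τ lam w y : ℝ}

lemma nonneg_of_forall_proxObjective_le (hτ : 0 < τ) (hw : 0 ≤ w)
    (hmin : ∀ t, proxObjective τ lam w y ≤ proxObjective τ lam w t) : 0 ≤ y := by
  by_contra! hy
  have hcmp := hmin 0
  have hfar : w ^ 2 < (y - w) ^ 2 := by nlinarith
  simp only [proxObjective, heaviside_of_nonpos hy.le, heaviside_of_nonpos le_rfl] at hcmp
  have : 0 < 1 / (2 * τ) := by positivity
  nlinarith

lemma eq_of_forall_proxObjective_le_of_pos (hτ : 0 < τ) (hlam : 0 ≤ lam) (hy : 0 < y)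
    (hmin : ∀ t, proxObjective τ lam w y ≤ proxObjective τ lam w t) : y = w := by
  have hcmp := hmin w
  have hstep : heaviside w ≤ 1 := by unfold heaviside; split_ifs <;> norm_num
  simp only [proxObjective, heaviside_of_pos hy, sub_self] at hcmp
  have hsq : (1 / (2 * τ)) * (y - w) ^ 2 ≤ 0 := by nlinarith
  have : (y - w) ^ 2 = 0 :=
    le_antisymm (nonpos_of_mul_nonpos_right hsq (by positivity)) (sq_nonneg _)
  linarith [pow_eq_zero_iff (n := 2) two_ne_zero |>.mp this]

lemma le_sq_of_forall_proxObjective_le_self (hτ : 0 < τ) (hw : 0 < w)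
    (hmin : ∀ t, proxObjective τ lam w w ≤ proxObjective τ lam w t) : 2 * τ * lam ≤ w ^ 2 := by
  have hcmp := hmin 0
  simp only [proxObjective, heaviside_of_pos hw, heaviside_of_nonpos le_rfl, sub_self] at hcmp
  have : lam ≤ w ^ 2 / (2 * τ) := by
    linarith [show (1 / (2 * τ)) * (0 - w) ^ 2 = w ^ 2 / (2 * τ) by ring]
  rwa [le_div_iff₀ (by positivity), mul_comm] at this

theorem eq_zero_of_forall_proxObjective_le (hτ : 0 < τ) (hw : 0 < w) (hlt : w ^ 2 < 2 * τ * lam)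
    (hmin : ∀ t, proxObjective τ lam w y ≤ proxObjective τ lam w t) : y = 0 := by
  have hlam : 0 ≤ lam := by nlinarith
  rcases (nonneg_of_forall_proxObjective_le hτ hw.le hmin).eq_or_lt with hy | hy
  · exact hy.symm
  · have hyw := eq_of_forall_proxObjective_le_of_pos hτ hlam hy hmin
    subst hyw
    linarith [le_sq_of_forall_proxObjective_le_self hτ hw hmin]

end Minimizer

lemma pos_and_sq_lt_of_abs_sub_sqrt_lt {w a : ℝ} (h : |w - √a| < √a) :
    0 < w ∧ w ^ 2 < 4 * a := by
  have hsqrt : 0 < √a := (abs_nonneg _).trans_lt h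
  have ha : (√a) ^ 2 = a := Real.sq_sqrt (Real.sqrt_pos.mp hsqrt).le
  rw [abs_lt] at h
  exact ⟨by linarith, by nlinarith⟩

theorem stmt_17_general (m : ℕ) (τ lam : ℝ) (hτ : 0 < τ)
    (y z : Fin m → ℝ)
    (hprox : ∀ i, ∀ t : ℝ,
      (1 / (2 * τ)) * (y i - (y i + τ * z i))^2 + lam * heaviside (y i)
        ≤ (1 / (2 * τ)) * (t - (y i + τ * z i))^2 + lam * heaviside t) :
    ∀ i, |y i + τ * z i - Real.sqrt (τ * lam / 2)| < Real.sqrt (τ * lam / 2) → y i = 0 := by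
  intro i hi
  obtain ⟨hpos, hlt⟩ := pos_and_sq_lt_of_abs_sub_sqrt_lt hi
  exact eq_zero_of_forall_proxObjective_le hτ hpos (by linarith) (hprox i)

theorem stmt_17 (m : ℕ) (τ lam : ℝ) (hτ : 0 < τ) (hlam : 0 < lam)
    (y z : Fin m → ℝ)
    (hprox : ∀ i, ∀ t : ℝ,
      (1 / (2 * τ)) * (y i - (y i + τ * z i))^2 + lam * heaviside (y i)
        ≤ (1 / (2 * τ)) * (t - (y i + τ * z i))^2 + lam * heaviside t) :
    ∀ i, |y i + τ * z i - Real.sqrt (τ * lam / 2)| < Real.sqrt (τ * lam / 2) → y i = 0 :=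
  stmt_17_general m τ lam hτ y z hprox
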